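/- arXiv:2305.17536 — 6 statements merged into one kernel-verified Lean document; each statement's English description precedes it below -/
import Mathlib

section
/- Let G and H be connected simple graphs, each having at least two vertices. If (u1,v1) and (u2,v2) are two adjacent vertices of the Cartesian product G □ H, then the closed neighborhoods of (u1,v1) and (u2,v2) in G □ H are distinct, i.e., N[(u1,v1)] ≠ N[(u2,v2)]. -/
open SimpleGraph

/-- The closed neighborhood of a vertex: the vertex together with its neighbors. -/
def SimpleGraph.closedNbhd {V : Type*} (G : SimpleGraph V) (v : V) : Set V :=
  insert v (G.neighborSet v)

/-- A coloring `f` is a locally identifying coloring of `G` if it is proper and, for every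
edge `uw` whose endpoints have distinct closed neighborhoods, the sets of colors appearing
on the two closed neighborhoods are distinct. -/
def SimpleGraph.IsLidColoring {V α : Type*} (G : SimpleGraph V) (f : V → α) : Prop :=
  (∀ ⦃u w⦄, G.Adj u w → f u ≠ f w) ∧
  (∀ ⦃u w⦄, G.Adj u w → G.closedNbhd u ≠ G.closedNbhd w →
    f '' G.closedNbhd u ≠ f '' G.closedNbhd w)

/-- `G` admits a locally identifying coloring with `k` colors. -/
def SimpleGraph.LidColorable {V : Type*} (G : SimpleGraph V) (k : ℕ) : Prop :=
  ∃ f : V → Fin k, G.IsLidColoring f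

/-- The lid-chromatic number of `G`: the least number of colors in a lid-coloring of `G`. -/
noncomputable def SimpleGraph.lidChromaticNumber {V : Type*} (G : SimpleGraph V) : ℕ∞ :=
  ⨅ k ∈ {k : ℕ | G.LidColorable k}, (k : ℕ∞)

/-- The tensor (categorical/Kronecker) product of two simple graphs. -/
def SimpleGraph.tensorProd {α β : Type*} (G : SimpleGraph α) (H : SimpleGraph β) :
    SimpleGraph (α × β) where
  Adj x y := G.Adj x.1 y.1 ∧ H.Adj x.2 y.2
  symm := ⟨fun _ _ h => ⟨h.1.symm, h.2.symm⟩⟩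
  loopless := ⟨fun x h => G.loopless.irrefl x.1 h.1⟩

/-
An edge of `G □ H` moves in one coordinate only. Stepping from the common endpoint along an
edge in the other coordinate, which exists because that factor is connected and nontrivial,
reaches a vertex adjacent to one end of the edge but neither equal nor adjacent to the other.
-/

namespace SimpleGraph

variable {α β V : Type*}

theorem mem_closedNbhd {G : SimpleGraph V} {v w : V} :
    w ∈ G.closedNbhd v ↔ w = v ∨ G.Adj v w :=
  Iff.rfl

variable {G : SimpleGraph α} {H : SimpleGraph β}

theorem boxProd_closedNbhd_ne_of_adj_left {u₁ u₂ : α} {v v' : β} (hu : G.Adj u₁ u₂)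
    (hv : H.Adj v v') : (G □ H).closedNbhd (u₁, v) ≠ (G □ H).closedNbhd (u₂, v) := by
  intro hN
  have hmem : (u₁, v') ∈ (G □ H).closedNbhd (u₁, v) := Or.inr (by simp [hv])
  rw [hN, mem_closedNbhd] at hmem
  simp [hu.ne, hu.ne', hv.ne, hv.ne'] at hmem

theorem boxProd_closedNbhd_ne_of_adj_right {u u' : α} {v₁ v₂ : β} (hu : G.Adj u u')
    (hv : H.Adj v₁ v₂) : (G □ H).closedNbhd (u, v₁) ≠ (G □ H).closedNbhd (u, v₂) := by
  intro hN
  have hmem : (u', v₁) ∈ (G □ H).closedNbhd (u, v₁) := Or.inr (by simp [hu])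
  rw [hN, mem_closedNbhd] at hmem
  simp [hu.ne, hu.ne', hv.ne, hv.ne'] at hmem

end SimpleGraph

/-- If `G` and `H` are connected graphs each with at least two vertices, then adjacent
vertices of the Cartesian (box) product `G □ H` have distinct closed neighborhoods. -/
theorem lid_stmt_0 {α β : Type*} [Nontrivial α] [Nontrivial β]
    (G : SimpleGraph α) (H : SimpleGraph β) (hG : G.Connected) (hH : H.Connected)
    (u₁ u₂ : α) (v₁ v₂ : β) (h : (G □ H).Adj (u₁, v₁) (u₂, v₂)) :
    (G □ H).closedNbhd (u₁, v₁) ≠ (G □ H).closedNbhd (u₂, v₂) := by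
  rcases boxProd_adj.mp h with ⟨hu, rfl⟩ | ⟨hv, rfl⟩
  · obtain ⟨v', hv'⟩ := hH.preconnected.exists_adj_of_nontrivial v₁
    exact boxProd_closedNbhd_ne_of_adj_left hu hv'
  · obtain ⟨u', hu'⟩ := hG.preconnected.exists_adj_of_nontrivial u₁
    exact boxProd_closedNbhd_ne_of_adj_right hu' hv
end

section
/- Let G and H be connected simple graphs, each having at least two vertices. Then χ_lid(G □ H) ≤ χ(G)·χ(H), where χ denotes the chromatic number. -/
open SimpleGraph

/-! Colour `(u, v)` by the pair `(g u, h v)` of proper colourings of the factors. If `xy` is a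
horizontal edge, pick a neighbour `w` of the common second coordinate: the colour of the vertical
neighbour `(x.1, w)` of `x` differs from every colour near `y`, because each vertex of `N[y]`
shares a coordinate with `y`, and `g x.1 ≠ g y.1`, `h w ≠ h y.2`. Vertical edges are symmetric. -/

namespace SimpleGraph

variable {V W γ δ : Type*} {G : SimpleGraph V} {H : SimpleGraph W}

theorem LidColorable.lidChromaticNumber_le {k : ℕ} (h : G.LidColorable k) :
    G.lidChromaticNumber ≤ k :=
  iInf₂_le k h

theorem IsLidColoring.comp_injective {f : V → γ} (hf : G.IsLidColoring f) {e : γ → δ}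
    (he : e.Injective) : G.IsLidColoring (e ∘ f) := by
  refine ⟨fun u w huw => he.ne (hf.1 huw), fun u w huw hN => ?_⟩
  rw [Set.image_comp, Set.image_comp]
  exact (Set.image_injective.mpr he).ne (hf.2 huw hN)

theorem fst_eq_or_snd_eq_of_mem_closedNbhd_boxProd {x z : V × W}
    (hz : z ∈ (G □ H).closedNbhd x) : z.1 = x.1 ∨ z.2 = x.2 := by
  rcases hz with rfl | hz
  · exact Or.inl rfl
  · rcases boxProd_adj.mp hz with ⟨-, h⟩ | ⟨-, h⟩
    · exact Or.inr h.symm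
    · exact Or.inl h.symm

theorem pair_notMem_image_closedNbhd_boxProd (g : G.Coloring γ) (h : H.Coloring δ)
    {y : V × W} {c : γ} {d : δ} (hc : c ≠ g y.1) (hd : d ≠ h y.2) :
    (c, d) ∉ (fun z : V × W => (g z.1, h z.2)) '' (G □ H).closedNbhd y := by
  rintro ⟨z, hz, ⟨⟩⟩
  rcases fst_eq_or_snd_eq_of_mem_closedNbhd_boxProd hz with h1 | h2
  · exact hc (congrArg g h1)
  · exact hd (congrArg h h2)

theorem isLidColoring_boxProd (g : G.Coloring γ) (h : H.Coloring δ)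
    (hG : ∀ u, ∃ u', G.Adj u u') (hH : ∀ v, ∃ v', H.Adj v v') :
    (G □ H).IsLidColoring fun z : V × W => (g z.1, h z.2) := by
  refine ⟨fun x y hxy hcol => ?_, fun x y hxy _ himage => ?_⟩
  · rcases boxProd_adj.mp hxy with ⟨ha, -⟩ | ⟨ha, -⟩
    · exact g.valid ha (congrArg Prod.fst hcol)
    · exact h.valid ha (congrArg Prod.snd hcol)
  · rcases boxProd_adj.mp hxy with ⟨ha, he⟩ | ⟨ha, he⟩
    · obtain ⟨w, hw⟩ := hH x.2
      refine pair_notMem_image_closedNbhd_boxProd g h (g.valid ha) (he ▸ h.valid hw.symm) ?_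
      rw [← himage]
      exact ⟨(x.1, w), Or.inr (boxProd_adj.mpr (Or.inr ⟨hw, rfl⟩)), rfl⟩
    · obtain ⟨u, hu⟩ := hG x.1
      refine pair_notMem_image_closedNbhd_boxProd g h (he ▸ g.valid hu.symm) (h.valid ha) ?_
      rw [← himage]
      exact ⟨(u, x.2), Or.inr (boxProd_adj.mpr (Or.inl ⟨hu, rfl⟩)), rfl⟩

theorem lidColorable_boxProd {k l : ℕ} (hk : G.Colorable k) (hl : H.Colorable l)
    (hG : ∀ u, ∃ u', G.Adj u u') (hH : ∀ v, ∃ v', H.Adj v v') :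
    (G □ H).LidColorable (k * l) := by
  obtain ⟨g⟩ := hk
  obtain ⟨h⟩ := hl
  exact ⟨_, (isLidColoring_boxProd g h hG hH).comp_injective finProdFinEquiv.injective⟩

theorem le_chromaticNumber_mul_chromaticNumber [Nonempty V] [Nonempty W] {n : ℕ∞}
    (h : ∀ k l : ℕ, G.Colorable k → H.Colorable l → n ≤ k * l) :
    n ≤ G.chromaticNumber * H.chromaticNumber := by
  have hG0 : G.chromaticNumber ≠ 0 := fun h0 => not_isEmpty_of_nonempty V
    (chromaticNumber_eq_zero_iff.mp h0)
  have hH0 : H.chromaticNumber ≠ 0 := fun h0 => not_isEmpty_of_nonempty W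
    (chromaticNumber_eq_zero_iff.mp h0)
  by_cases hGt : G.chromaticNumber = ⊤
  · simp [hGt, hH0]
  by_cases hHt : H.chromaticNumber = ⊤
  · simp [hHt, hG0]
  have := h _ _ (colorable_of_chromaticNumber_ne_top hGt) (colorable_of_chromaticNumber_ne_top hHt)
  rwa [ENat.natCast_toNat hGt, ENat.natCast_toNat hHt] at this

end SimpleGraph

/-- For connected graphs `G` and `H` with at least two vertices each,
`χ_lid(G □ H) ≤ χ(G) · χ(H)`. -/
theorem lid_stmt_1 {α β : Type*} [Nontrivial α] [Nontrivial β]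
    (G : SimpleGraph α) (H : SimpleGraph β) (hG : G.Connected) (hH : H.Connected) :
    (G □ H).lidChromaticNumber ≤ G.chromaticNumber * H.chromaticNumber :=
  le_chromaticNumber_mul_chromaticNumber fun _ _ hk hl =>
    (lidColorable_boxProd hk hl hG.preconnected.exists_adj_of_nontrivial
      hH.preconnected.exists_adj_of_nontrivial).lidChromaticNumber_le.trans_eq (Nat.cast_mul _ _)
end

section
/- For every integer n ≥ 3, the lid-chromatic number of the Cartesian product of the triangle C_3 and the cycle C_n satisfies χ_lid(C_3 □ C_n) = 5. -/
open SimpleGraph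

/-!
Lower bound: the vertices of a triangle `K₃ × {j}` are pairwise adjacent and have distinct closed
neighborhoods, so their color sets are three distinct supersets of the three colors of the
triangle. With `k` colors there are only `2 ^ (k - 3)` such supersets, hence `k ≥ 5`.

Upper bound: color each column by one of `A = (0,1,2)`, `B = (1,3,4)`, `C = (2,4,1)`, in the cyclic
order `AB…AB` (`n` even) or `AB…ABC` (`n` odd). The lid conditions only involve windows of four
consecutive columns, every such window is a walk in the digraph `A → B → C → A`, `B → A`, and the
finitely many walks of length three are checked by computation.
-/

namespace SimpleGraph

variable {V α β γ : Type*}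

theorem lidChromaticNumber_eq {G : SimpleGraph V} {k : ℕ} (hk : G.LidColorable k)
    (hmin : ∀ k', G.LidColorable k' → k ≤ k') : G.lidChromaticNumber = k :=
  le_antisymm (iInf₂_le k hk) (le_iInf₂ fun k' hk' => by exact_mod_cast hmin k' hk')

theorem isLidColoring_of_forall_adj {G : SimpleGraph V} {f : V → α}
    (h : ∀ ⦃u w⦄, G.Adj u w → f u ≠ f w ∧ f '' G.closedNbhd u ≠ f '' G.closedNbhd w) :
    G.IsLidColoring f :=
  ⟨fun _ _ huw => (h huw).1, fun _ _ huw _ => (h huw).2⟩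

theorem IsClique.subset_closedNbhd {G : SimpleGraph V} {s : Set V} (hs : G.IsClique s)
    {v : V} (hv : v ∈ s) : s ⊆ G.closedNbhd v := by
  intro w hw
  rcases eq_or_ne v w with rfl | hne
  · exact Set.mem_insert _ _
  · exact Set.mem_insert_of_mem _ (hs hv hw hne)

/-- The color sets of the closed neighborhoods of a clique all contain the `#s` colors of the
clique itself, and must be pairwise distinct, so they are told apart by the remaining colors. -/
theorem IsLidColoring.card_le_two_pow [Fintype α] [DecidableEq α] {G : SimpleGraph V}
    {f : V → α} (hf : G.IsLidColoring f) {s : Finset V} (hs : G.IsClique (s : Set V))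
    (hN : (s : Set V).Pairwise fun u w => G.closedNbhd u ≠ G.closedNbhd w) :
    s.card ≤ 2 ^ (Fintype.card α - s.card) := by
  classical
  set C := s.image f
  have hC : C.card = s.card :=
    Finset.card_image_of_injOn fun u hu w hw h => by_contra fun hne => hf.1 (hs hu hw hne) h
  have hCsub : ∀ v ∈ s, (C : Set α) ⊆ f '' G.closedNbhd v := fun v hv => by
    rw [Finset.coe_image]
    exact Set.image_mono (hs.subset_closedNbhd hv)
  let extra : V → Finset α := fun v => {x | x ∈ f '' G.closedNbhd v ∧ x ∉ C}
  calc s.card ≤ Cᶜ.powerset.card := by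
        refine Finset.card_le_card_of_injOn extra (fun v _ => ?_) fun u hu w hw h => ?_
        · exact Finset.mem_powerset.2 fun x hx => Finset.mem_compl.2 (Finset.mem_filter.1 hx).2.2
        · by_contra hne
          apply hf.2 (hs hu hw hne) (hN hu hw hne)
          ext x
          by_cases hx : x ∈ C
          · exact iff_of_true (hCsub u hu hx) (hCsub w hw hx)
          · simpa [extra, hx] using congrArg (x ∈ ·) h
    _ = 2 ^ (Fintype.card α - s.card) := by
        rw [Finset.card_powerset, Finset.card_compl, hC]

theorem boxProd_closedNbhd_ne {G : SimpleGraph α} {H : SimpleGraph β} {a a' : α} {b b' : β}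
    (ha : a ≠ a') (hb : H.Adj b b') :
    (G □ H).closedNbhd (a, b) ≠ (G □ H).closedNbhd (a', b) := by
  intro h
  have hmem : (a, b') ∈ (G □ H).closedNbhd (a, b) :=
    Set.mem_insert_of_mem _ (boxProd_adj.2 (Or.inr ⟨hb, rfl⟩))
  rw [h] at hmem
  rcases hmem with h' | h'
  · exact ha (Prod.ext_iff.1 h').1
  · rcases boxProd_adj.1 h' with ⟨_, hbb⟩ | ⟨_, haa⟩
    · exact hb.ne hbb
    · exact ha haa.symm

theorem IsLidColoring.card_le_two_pow_of_boxProd [Fintype γ] [DecidableEq γ]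
    {G : SimpleGraph α} {H : SimpleGraph β} {f : α × β → γ} (hf : (G □ H).IsLidColoring f)
    {s : Finset α} (hs : G.IsClique (s : Set α)) {b b' : β} (hb : H.Adj b b') :
    s.card ≤ 2 ^ (Fintype.card γ - s.card) := by
  let layer : α ↪ α × β := ⟨fun a => (a, b), fun _ _ h => (Prod.ext_iff.1 h).1⟩
  have hlayer : ∀ u ∈ s.map layer, ∃ a ∈ s, u = (a, b) := fun u hu => by
    obtain ⟨a, ha, rfl⟩ := Finset.mem_map.1 hu
    exact ⟨a, ha, rfl⟩
  simpa using hf.card_le_two_pow (s := s.map layer)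
    (fun u hu w hw hne => by
      obtain ⟨a, ha, rfl⟩ := hlayer u hu
      obtain ⟨a', ha', rfl⟩ := hlayer w hw
      exact boxProd_adj.2 (Or.inl ⟨hs ha ha' fun h => hne (by rw [h]), rfl⟩))
    (fun u hu w hw hne => by
      obtain ⟨a, -, rfl⟩ := hlayer u hu
      obtain ⟨a', -, rfl⟩ := hlayer w hw
      exact boxProd_closedNbhd_ne (fun h => hne (by rw [h])) hb)

end SimpleGraph

namespace TriangleBoxCycle

open SimpleGraph

variable {n : ℕ} {α : Type*}

local notation "Γ" => boxProd (cycleGraph 3) (cycleGraph (n + 3))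

theorem cycleGraph_adj_iff (j j' : Fin (n + 3)) :
    (cycleGraph (n + 3)).Adj j j' ↔ j' = j - 1 ∨ j' = j + 1 := by
  rw [← mem_neighborSet, cycleGraph_neighborSet (n := n + 1)]
  rfl

theorem closedNbhd_eq (i : Fin 3) (j : Fin (n + 3)) :
    closedNbhd Γ (i, j) = {(i, j), (i + 1, j), (i + 2, j), (i, j - 1), (i, j + 1)} := by
  have hne : ∀ a b : Fin 3, a ≠ b ↔ b = a + 1 ∨ b = a + 2 := by decide
  ext ⟨x, y⟩
  simp only [closedNbhd, Set.mem_insert_iff, mem_neighborSet, boxProd_adj,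
    cycleGraph_three_eq_top, top_adj, cycleGraph_adj_iff, Set.mem_singleton_iff, Prod.mk.injEq,
    hne]
  tauto

variable [DecidableEq α]

/-- The colors seen from row `i` of a column colored `q` whose neighboring columns are colored
`p` and `r`. -/
def nbhdColors (p q r : Fin 3 → α) (i : Fin 3) : Finset α :=
  {q i, q (i + 1), q (i + 2), p i, r i}

/-- The lid conditions on the edges inside column `q` and between columns `q` and `r`, for
four consecutive columns `p q r s`. -/
def LidWindow (p q r s : Fin 3 → α) : Prop :=
  (∀ i i', i ≠ i' → q i ≠ q i' ∧ nbhdColors p q r i ≠ nbhdColors p q r i') ∧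
    ∀ i, q i ≠ r i ∧ nbhdColors p q r i ≠ nbhdColors q r s i

instance (p q r s : Fin 3 → α) : Decidable (LidWindow p q r s) := by
  unfold LidWindow; infer_instance

theorem image_closedNbhd (c : Fin (n + 3) → Fin 3 → α) (i : Fin 3) (j : Fin (n + 3)) :
    (fun v => c v.2 v.1) '' closedNbhd Γ (i, j) =
      ↑(nbhdColors (c (j - 1)) (c j) (c (j + 1)) i) := by
  rw [closedNbhd_eq]
  simp [nbhdColors, Set.image_insert_eq]

theorem isLidColoring_of_lidWindow (c : Fin (n + 3) → Fin 3 → α)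
    (hc : ∀ j, LidWindow (c (j - 1)) (c j) (c (j + 1)) (c (j + 1 + 1))) :
    IsLidColoring Γ fun v => c v.2 v.1 := by
  set f : Fin 3 × Fin (n + 3) → α := fun v => c v.2 v.1
  have hright : ∀ i j, f (i, j) ≠ f (i, j + 1) ∧
      f '' closedNbhd Γ (i, j) ≠ f '' closedNbhd Γ (i, j + 1) := fun i j => by
    simp only [f, image_closedNbhd, add_sub_cancel_right, ne_eq, Finset.coe_inj]
    exact (hc j).2 i
  refine isLidColoring_of_forall_adj ?_
  rintro ⟨i, j⟩ ⟨i', j'⟩ h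
  rcases boxProd_adj.1 h with ⟨hi, rfl : j = j'⟩ | ⟨hj, rfl : i = i'⟩
  · rw [cycleGraph_three_eq_top, top_adj] at hi
    simp only [f, image_closedNbhd, ne_eq, Finset.coe_inj]
    exact (hc j).1 i i' hi
  · rcases (cycleGraph_adj_iff j j').1 hj with rfl | rfl
    · simpa only [sub_add_cancel, ne_comm] using hright i (j - 1)
    · exact hright i j

def column : Fin 3 → Fin 3 → Fin 5 := ![![0, 1, 2], ![1, 3, 4], ![2, 4, 1]]

/-- Writing `A, B, C` for the columns `0, 1, 2`, the digraph `A → B → C → A`, `B → A`. -/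
def Step (a b : Fin 3) : Prop := b = a + 1 ∨ (a = 1 ∧ b = 0)

instance : DecidableRel Step := fun _ _ => by unfold Step; infer_instance

theorem lidWindow_column :
    ∀ a b c d, Step a b → Step b c → Step c d →
      LidWindow (column a) (column b) (column c) (column d) := by
  decide

def columnType (N k : ℕ) : Fin 3 :=
  if Odd N ∧ k + 1 = N then 2 else if k % 2 = 0 then 0 else 1

theorem step_columnType {N k : ℕ} (hk : k + 1 < N) :
    Step (columnType N k) (columnType N (k + 1)) := by
  unfold columnType Step
  split_ifs <;> simp_all [Nat.odd_iff] <;> omega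

theorem step_columnType_last {N : ℕ} (hN : 2 ≤ N) :
    Step (columnType N (N - 1)) (columnType N 0) := by
  unfold columnType Step
  split_ifs <;> simp_all [Nat.odd_iff] <;> omega

theorem step_columnType_add_one (j : Fin (n + 3)) :
    Step (columnType (n + 3) j) (columnType (n + 3) ↑(j + 1)) := by
  rw [Fin.val_add_one]
  split_ifs with hj
  · rw [hj]
    exact step_columnType_last (by omega)
  · exact step_columnType (by simpa using Fin.val_lt_last hj)

theorem lidColorable_five : (Γ).LidColorable 5 := by
  refine ⟨_, isLidColoring_of_lidWindow (fun j => column (columnType (n + 3) j)) fun j => ?_⟩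
  apply lidWindow_column
  · have h := step_columnType_add_one (j - 1)
    rwa [sub_add_cancel] at h
  · exact step_columnType_add_one j
  · exact step_columnType_add_one (j + 1)

theorem five_le_of_lidColorable {k : ℕ} (hk : (Γ).LidColorable k) : 5 ≤ k := by
  obtain ⟨f, hf⟩ := hk
  have h := hf.card_le_two_pow_of_boxProd (s := Finset.univ)
    (by simp [cycleGraph_three_eq_top]) (b := 0) (b' := 1) (by simp [cycleGraph_adj])
  simp only [Finset.card_univ, Fintype.card_fin] at h
  by_contra! hk
  have : 2 ^ (k - 3) ≤ 2 ^ 1 := Nat.pow_le_pow_right two_pos (by omega)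
  omega

end TriangleBoxCycle

/-- For every `n ≥ 3`, `χ_lid(C_3 □ C_n) = 5`. -/
theorem lid_stmt_4 (n : ℕ) (hn : 3 ≤ n) :
    (cycleGraph 3 □ cycleGraph n).lidChromaticNumber = 5 := by
  obtain ⟨m, rfl⟩ : ∃ m, n = m + 3 := ⟨n - 3, by omega⟩
  exact lidChromaticNumber_eq TriangleBoxCycle.lidColorable_five
    fun _ => TriangleBoxCycle.five_le_of_lidColorable
end

section
/- Let m, n ≥ 3 be integers such that at least one of m and n is odd. Then the lid-chromatic number of the Cartesian product of the cycles C_m and C_n satisfies χ_lid(C_m □ C_n) ≥ 4. -/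
open SimpleGraph

/-! With three colors, two adjacent vertices whose closed neighborhoods differ cannot both see
all three colors, and they cannot both miss a color either, since then both neighborhoods would
see exactly the two colors of the edge. So "the closed neighborhood sees every color" is a
proper 2-coloring. In `C_m □ C_n` all adjacent vertices have distinct closed neighborhoods, and
each row (or column) is a copy of the odd cycle, which has no proper 2-coloring. -/

lemma Set.eq_pair_of_ne_univ {α : Type*} [Finite α] (hα : Nat.card α = 3)
    {s : Set α} {a b : α} (hab : a ≠ b) (ha : a ∈ s) (hb : b ∈ s) (hs : s ≠ Set.univ) :
    s = {a, b} := by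
  have hcard : s.ncard ≤ 2 := by
    have := Set.ncard_lt_ncard (Set.ssubset_univ_iff.mpr hs)
    rw [Set.ncard_univ, hα] at this
    omega
  refine (Set.eq_of_subset_of_ncard_le (Set.insert_subset ha (Set.singleton_subset_iff.mpr hb))
    ?_ (Set.toFinite s)).symm
  rwa [Set.ncard_pair hab]

namespace SimpleGraph

variable {V : Type*} {G : SimpleGraph V}

lemma mem_closedNbhd_self (v : V) : v ∈ G.closedNbhd v :=
  Set.mem_insert _ _

lemma mem_closedNbhd_of_adj {u v : V} (h : G.Adj u v) : v ∈ G.closedNbhd u :=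
  Set.mem_insert_of_mem _ h

lemma closedNbhd_ne_of_adj_of_not_adj {u v w : V} (huw : G.Adj u w) (hwv : w ≠ v)
    (hvw : ¬ G.Adj v w) : G.closedNbhd u ≠ G.closedNbhd v := by
  intro h
  have hw : w ∈ G.closedNbhd v := h ▸ mem_closedNbhd_of_adj huw
  rcases hw with hw | hw
  · exact hwv hw
  · exact hvw hw

lemma boxProd_closedNbhd_ne_s6 {W : Type*} {H : SimpleGraph W} (hG : ∀ a, ∃ a', G.Adj a a')
    (hH : ∀ b, ∃ b', H.Adj b b') {x y : V × W} (hxy : (G □ H).Adj x y) :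
    (G □ H).closedNbhd x ≠ (G □ H).closedNbhd y := by
  rcases hxy with ⟨hG1, hH2⟩ | ⟨hH1, hG2⟩
  · obtain ⟨b', hb'⟩ := hH x.2
    refine closedNbhd_ne_of_adj_of_not_adj (w := (x.1, b')) (boxProd_adj.mpr (.inr ⟨hb', rfl⟩))
      (fun h => hb'.ne (hH2.trans (congrArg Prod.snd h).symm)) ?_
    rintro (⟨-, h⟩ | ⟨-, h⟩)
    · exact hb'.ne (hH2.trans h)
    · exact hG1.ne' h
  · obtain ⟨a', ha'⟩ := hG x.1
    refine closedNbhd_ne_of_adj_of_not_adj (w := (a', x.2)) (boxProd_adj.mpr (.inl ⟨ha', rfl⟩))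
      (fun h => ha'.ne (hG2.trans (congrArg Prod.fst h).symm)) ?_
    rintro (⟨-, h⟩ | ⟨-, h⟩)
    · exact hH1.ne' h
    · exact ha'.ne (hG2.trans h)

namespace IsLidColoring

variable {α : Type*} [Finite α] {f : V → α}

lemma image_closedNbhd_eq_univ_iff (hf : G.IsLidColoring f) (hα : Nat.card α = 3) {u v : V}
    (huv : G.Adj u v) (hN : G.closedNbhd u ≠ G.closedNbhd v) :
    f '' G.closedNbhd u = Set.univ ↔ f '' G.closedNbhd v ≠ Set.univ := by
  have hne := hf.2 huv hN
  refine ⟨fun hu hv => hne (hu.trans hv.symm), fun hv => by_contra fun hu => hne ?_⟩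
  have hfuv := hf.1 huv
  rw [Set.eq_pair_of_ne_univ hα hfuv (Set.mem_image_of_mem f (mem_closedNbhd_self u))
      (Set.mem_image_of_mem f (mem_closedNbhd_of_adj huv)) hu,
    Set.eq_pair_of_ne_univ hα hfuv (Set.mem_image_of_mem f (mem_closedNbhd_of_adj huv.symm))
      (Set.mem_image_of_mem f (mem_closedNbhd_self v)) hv]

lemma colorable_two (hf : G.IsLidColoring f) (hα : Nat.card α = 3)
    (hN : ∀ ⦃u v⦄, G.Adj u v → G.closedNbhd u ≠ G.closedNbhd v) : G.Colorable 2 := by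
  classical
  let c : G.Coloring Bool := Coloring.mk (fun v => decide (f '' G.closedNbhd v = Set.univ))
    fun huv heq => by
      have := hf.image_closedNbhd_eq_univ_iff hα huv (hN huv)
      rw [decide_eq_decide] at heq
      tauto
  simpa using c.colorable

end IsLidColoring

lemma LidColorable.mono {j k : ℕ} (hjk : j ≤ k) (h : G.LidColorable j) : G.LidColorable k := by
  obtain ⟨f, hproper, hlid⟩ := h
  have hinj := Fin.castLE_injective hjk
  refine ⟨Fin.castLE hjk ∘ f, fun u w huw e => hproper huw (hinj e), fun u w huw hN e => ?_⟩
  rw [Set.image_comp, Set.image_comp, Set.image_eq_image hinj] at e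
  exact hlid huw hN e

lemma succ_le_lidChromaticNumber {k : ℕ} (h : ¬ G.LidColorable k) :
    ((k + 1 : ℕ) : ℕ∞) ≤ G.lidChromaticNumber := by
  refine le_iInf₂ fun j hj => ?_
  by_contra hlt
  rw [Nat.cast_le] at hlt
  exact h (LidColorable.mono (by omega) hj)

lemma cycleGraph_adj_add_one {n : ℕ} (a : Fin (n + 2)) : (cycleGraph (n + 2)).Adj a (a + 1) := by
  simp [cycleGraph_adj]

lemma cycleGraph_not_colorable_two_of_odd {n : ℕ} (hn : 2 ≤ n) (hodd : Odd n) :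
    ¬ (cycleGraph n).Colorable 2 := fun h => by
  have := h.chromaticNumber_le
  rw [chromaticNumber_cycleGraph_of_odd n hn hodd] at this
  norm_num at this

end SimpleGraph

/-- If `m, n ≥ 3` and at least one of them is odd, then `χ_lid(C_m □ C_n) ≥ 4`. -/
theorem lid_stmt_6 (m n : ℕ) (hm : 3 ≤ m) (hn : 3 ≤ n) (hodd : Odd m ∨ Odd n) :
    4 ≤ (cycleGraph m □ cycleGraph n).lidChromaticNumber := by
  obtain ⟨m, rfl⟩ : ∃ k, m = k + 2 := ⟨m - 2, by omega⟩
  obtain ⟨n, rfl⟩ : ∃ k, n = k + 2 := ⟨n - 2, by omega⟩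
  refine succ_le_lidChromaticNumber (k := 3) ?_
  rintro ⟨f, hf⟩
  have hcol : (cycleGraph (m + 2) □ cycleGraph (n + 2)).Colorable 2 :=
    hf.colorable_two (by simp) fun _ _ =>
      boxProd_closedNbhd_ne_s6 (fun a => ⟨_, cycleGraph_adj_add_one a⟩)
        (fun b => ⟨_, cycleGraph_adj_add_one b⟩)
  rcases hodd with hodd | hodd
  · exact cycleGraph_not_colorable_two_of_odd (by omega) hodd
      (hcol.of_hom (boxProdLeft _ _ 0).toHom)
  · exact cycleGraph_not_colorable_two_of_odd (by omega) hodd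
      (hcol.of_hom (boxProdRight _ _ 0).toHom)
end

section
/- Let m ≥ 5 be an odd integer and n ≥ 4 be an even integer. Then the lid-chromatic number of the Cartesian product of the cycles C_m and C_n satisfies χ_lid(C_m □ C_n) = 4. -/
open SimpleGraph

/-! With three colours, the colour sets of the closed neighbourhoods of the ends of an edge `uv`
both contain the two distinct colours `f u` and `f v`, so each is either that pair or all three
colours. If `N[u] ≠ N[v]` the two sets differ, so exactly one end sees all three colours, and this
2-colours the odd cycle `i ↦ (i, b)` of `C_m □ C_n`, which is impossible.

For four colours, colour `(i, j)` by `A i` on even rows and `B i` on odd rows. The colour set of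
`N[(i, j)]` is then `A(N[i]) ∪ {B i}` or `B(N[i]) ∪ {A i}`, so all conditions become conditions on
four consecutive columns of `C_m`, which are checked for an explicit pattern. -/

lemma Fin.three_eq_pair_or_eq_univ {S : Set (Fin 3)} {x y : Fin 3} (hxy : x ≠ y) (hx : x ∈ S)
    (hy : y ∈ S) : S = {x, y} ∨ S = Set.univ := by
  by_cases h : ∀ z ∈ S, z = x ∨ z = y
  · left
    ext z
    exact ⟨h z, by rintro (rfl | rfl) <;> assumption⟩
  · right
    push Not at h
    obtain ⟨z, hz, hzx, hzy⟩ := h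
    have hcover : ∀ x y z w : Fin 3, x ≠ y → z ≠ x → z ≠ y → w = x ∨ w = y ∨ w = z := by decide
    exact Set.eq_univ_of_forall fun w => by
      rcases hcover x y z w hxy hzx hzy with rfl | rfl | rfl <;> assumption

namespace SimpleGraph

variable {V W α : Type*}

section ClosedNbhd

variable (G : SimpleGraph V) (H : SimpleGraph W)

lemma closedNbhd_boxProd (x : V × W) :
    (G □ H).closedNbhd x = G.closedNbhd x.1 ×ˢ {x.2} ∪ {x.1} ×ˢ H.closedNbhd x.2 := by
  ext ⟨a, b⟩
  simp only [closedNbhd, neighborSet_boxProd, Set.mem_insert_iff, Set.mem_union, Set.mem_prod,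
    Set.mem_singleton_iff, Prod.ext_iff]
  tauto

lemma preimage_closedNbhd_boxProd_left (a : V) (b : W) :
    (·, b) ⁻¹' (G □ H).closedNbhd (a, b) = G.closedNbhd a := by
  ext a'
  simp only [closedNbhd_boxProd, Set.mem_preimage, Set.mem_union, Set.mem_prod,
    Set.mem_singleton_iff, and_true]
  exact or_iff_left_of_imp fun ⟨ha, _⟩ => ha ▸ Set.mem_insert a' _

variable {G} in
lemma closedNbhd_boxProd_ne_of_left {a a' : V} (b : W) (h : G.closedNbhd a ≠ G.closedNbhd a') :
    (G □ H).closedNbhd (a, b) ≠ (G □ H).closedNbhd (a', b) := fun heq =>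
  h (by rw [← preimage_closedNbhd_boxProd_left G H a b, heq, preimage_closedNbhd_boxProd_left])

end ClosedNbhd

section CycleGraph

variable {n : ℕ}

lemma closedNbhd_cycleGraph (v : Fin (n + 2)) :
    (cycleGraph (n + 2)).closedNbhd v = {v, v - 1, v + 1} := by
  rw [closedNbhd, cycleGraph_neighborSet]

lemma cycleGraph_adj_iff_eq_add_one {u v : Fin (n + 2)} :
    (cycleGraph (n + 2)).Adj u v ↔ v = u + 1 ∨ u = v + 1 := by
  rw [cycleGraph_adj, sub_eq_iff_eq_add', sub_eq_iff_eq_add', or_comm]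

lemma apply_ne_apply_of_cycleGraph_adj {f : Fin (n + 2) → α} (h : ∀ i, f i ≠ f (i + 1))
    {i j : Fin (n + 2)} (hij : (cycleGraph (n + 2)).Adj i j) : f i ≠ f j := by
  rcases cycleGraph_adj_iff_eq_add_one.mp hij with rfl | rfl
  exacts [h i, (h j).symm]

lemma cycleGraph_closedNbhd_ne_of_adj (hn : 2 ≤ n) {u v : Fin (n + 2)}
    (huv : (cycleGraph (n + 2)).Adj u v) :
    (cycleGraph (n + 2)).closedNbhd u ≠ (cycleGraph (n + 2)).closedNbhd v :=
  apply_ne_apply_of_cycleGraph_adj (fun u heq => by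
    have hmem : u - 1 ∈ (cycleGraph (n + 2)).closedNbhd (u + 1) := by
      rw [← heq, closedNbhd_cycleGraph]; simp
    rw [closedNbhd_cycleGraph] at hmem
    simp only [Set.mem_insert_iff, Set.mem_singleton_iff, Fin.ext_iff, Fin.val_add_one,
      Fin.coe_sub_one, Fin.val_last, Fin.val_zero] at hmem
    split_ifs at hmem <;> omega) huv

end CycleGraph

section LidChromaticNumber

variable {G : SimpleGraph V}

lemma LidColorable.mono_s7 {k k' : ℕ} (h : G.LidColorable k) (hk : k ≤ k') :
    G.LidColorable k' := by
  obtain ⟨f, hproper, hlid⟩ := h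
  have hinj := Fin.castLE_injective hk
  refine ⟨Fin.castLE hk ∘ f, fun u v huv => hinj.ne (hproper huv), fun u v huv hN => ?_⟩
  rw [Set.image_comp, Set.image_comp]
  exact hinj.image_injective.ne (hlid huv hN)

lemma lidChromaticNumber_eq_succ {k : ℕ} (h : G.LidColorable (k + 1))
    (h' : ¬ G.LidColorable k) : G.lidChromaticNumber = k + 1 := by
  refine le_antisymm (by exact_mod_cast iInf₂_le (k + 1) h) (le_iInf₂ fun j hj => ?_)
  by_contra! hlt
  exact h' (hj.mono_s7 (by exact_mod_cast Order.le_of_lt_add_one hlt))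

end LidChromaticNumber

section LowerBound

variable {G : SimpleGraph V}

/-- Adjacent vertices with equal closed neighbourhoods are true twins; a lid-coloring only has to
distinguish the ends of the remaining edges. -/
def nonTwinGraph (G : SimpleGraph V) : SimpleGraph V where
  Adj u v := G.Adj u v ∧ G.closedNbhd u ≠ G.closedNbhd v
  symm := ⟨fun _ _ h => ⟨h.1.symm, h.2.symm⟩⟩
  loopless := ⟨fun v h => G.loopless.irrefl v h.1⟩

lemma IsLidColoring.image_closedNbhd_eq_univ_iff_s7 {f : V → Fin 3} (hf : G.IsLidColoring f)
    {u v : V} (huv : G.nonTwinGraph.Adj u v) :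
    f '' G.closedNbhd u = Set.univ ↔ f '' G.closedNbhd v ≠ Set.univ := by
  obtain ⟨hadj, hN⟩ := huv
  have hne := hf.2 hadj hN
  have hfuv := hf.1 hadj
  have mem_self (w : V) : f w ∈ f '' G.closedNbhd w := Set.mem_image_of_mem f (Set.mem_insert w _)
  have mem_adj {w w' : V} (h : G.Adj w w') : f w' ∈ f '' G.closedNbhd w :=
    Set.mem_image_of_mem f (Set.mem_insert_of_mem w h)
  refine ⟨fun hu hv => hne (hu.trans hv.symm), fun hv => ?_⟩
  refine (Fin.three_eq_pair_or_eq_univ hfuv (mem_self u) (mem_adj hadj)).resolve_left fun hu => ?_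
  exact (Fin.three_eq_pair_or_eq_univ hfuv (mem_adj hadj.symm) (mem_self v)).elim
    (fun hv' => hne (hu.trans hv'.symm)) hv

lemma LidColorable.colorable_nonTwinGraph (h : G.LidColorable 3) :
    G.nonTwinGraph.Colorable 2 := by
  obtain ⟨f, hf⟩ := h
  refine (Coloring.mk (fun v => decide (f '' G.closedNbhd v = Set.univ)) ?_).colorable
  intro u v huv
  simp [hf.image_closedNbhd_eq_univ_iff_s7 huv]

theorem not_lidColorable_three_cycleGraph_boxProd {m : ℕ} (hm : Odd m) (h5 : 5 ≤ m)
    (H : SimpleGraph W) [Nonempty W] : ¬ (cycleGraph m □ H).LidColorable 3 := by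
  obtain ⟨k, rfl⟩ : ∃ k, m = k + 2 := ⟨m - 2, by omega⟩
  intro h
  obtain ⟨b⟩ := ‹Nonempty W›
  let row : cycleGraph (k + 2) →g (cycleGraph (k + 2) □ H).nonTwinGraph :=
    ⟨fun i => (i, b), fun hij => ⟨boxProd_adj_left.mpr hij,
      closedNbhd_boxProd_ne_of_left H b (cycleGraph_closedNbhd_ne_of_adj (by omega) hij)⟩⟩
  have h2 := (h.colorable_nonTwinGraph.of_hom row).chromaticNumber_le
  rw [chromaticNumber_cycleGraph_of_odd _ (by omega) hm] at h2
  norm_num at h2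

end LowerBound

section Layers

/-- The colours seen from `(a, b)` in `G □ H` when the row of `b` is coloured by `col β`
and its neighbouring rows by `col !β`. -/
def layerColors (G : SimpleGraph V) (col : Bool → V → α) (β : Bool) (a : V) : Set α :=
  insert (col (!β) a) (col β '' G.closedNbhd a)

variable {G : SimpleGraph V} {H : SimpleGraph W}

lemma Coloring.eq_not_of_adj (c : H.Coloring Bool) {b b' : W} (h : H.Adj b b') : c b' = !c b :=
  Bool.eq_not_iff.mpr (c.valid h).symm

variable (c : H.Coloring Bool) (hH : ∀ b, ∃ b', H.Adj b b') (col : Bool → V → α)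
include c hH

lemma image_closedNbhd_boxProd (a : V) (b : W) :
    (fun x => col (c x.2) x.1) '' (G □ H).closedNbhd (a, b) = layerColors G col (c b) a := by
  ext z
  rw [closedNbhd_boxProd]
  constructor
  · rintro ⟨⟨a', b'⟩, ⟨ha', rfl : b' = b⟩ | ⟨rfl : a' = a, rfl | hb'⟩, rfl⟩
    · exact Or.inr ⟨a', ha', rfl⟩
    · exact Or.inr ⟨a', Set.mem_insert a' _, rfl⟩
    · exact Or.inl (congrArg (col · a') (c.eq_not_of_adj hb'))
  · rintro (rfl | ⟨a', ha', rfl⟩)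
    · obtain ⟨b', hb'⟩ := hH b
      exact ⟨(a, b'), Or.inr ⟨rfl, Set.mem_insert_of_mem b hb'⟩,
        congrArg (col · a) (c.eq_not_of_adj hb')⟩
    · exact ⟨(a', b), Or.inl ⟨ha', rfl⟩, rfl⟩

theorem isLidColoring_boxProd_s7
    (hcol : ∀ β a, col β a ≠ col (!β) a)
    (hcol_adj : ∀ β a a', G.Adj a a' → col β a ≠ col β a')
    (hlayer : ∀ β a, layerColors G col β a ≠ layerColors G col (!β) a)
    (hlayer_adj : ∀ β a a', G.Adj a a' → layerColors G col β a ≠ layerColors G col β a') :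
    (G □ H).IsLidColoring (fun x => col (c x.2) x.1) := by
  refine ⟨?_, ?_⟩
  · rintro ⟨a, b⟩ ⟨a', b'⟩ (⟨ha, rfl : b = b'⟩ | ⟨hb, rfl : a = a'⟩)
    · exact hcol_adj _ _ _ ha
    · simpa only [c.eq_not_of_adj hb] using hcol (c b) a
  · rintro ⟨a, b⟩ ⟨a', b'⟩ (⟨ha, rfl : b = b'⟩ | ⟨hb, rfl : a = a'⟩) -
    all_goals rw [image_closedNbhd_boxProd c hH, image_closedNbhd_boxProd c hH]
    · exact hlayer_adj _ _ _ ha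
    · simpa only [c.eq_not_of_adj hb] using hlayer (c b) a

end Layers

lemma layerColors_cycleGraph {n : ℕ} [DecidableEq α] (col : Bool → Fin (n + 2) → α) (β : Bool)
    (i : Fin (n + 2)) :
    layerColors (cycleGraph (n + 2)) col β i =
      ↑({col (!β) i, col β i, col β (i - 1), col β (i + 1)} : Finset α) := by
  simp [layerColors, closedNbhd_cycleGraph, Set.image_insert_eq]

section OddCycle

/-- Column `k` of `C_m □ C_n` is coloured by the first colour of `oddCycleColumn k` on even rows
and by the second on odd rows. Away from columns `1` and `2`, which absorb the odd length of
`C_m`, the pairs alternate between `(0, 1)` and `(2, 3)`. -/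
def oddCycleColumn : ℕ → Fin 4 × Fin 4
  | 0 => (0, 1)
  | 1 => (1, 2)
  | 2 => (3, 0)
  | k + 3 => if Even k then (0, 1) else (2, 3)

def oddCycleColoring (m : ℕ) (β : Bool) (i : Fin m) : Fin 4 :=
  if β then (oddCycleColumn i).1 else (oddCycleColumn i).2

def oddCycleWindows :
    List ((Fin 4 × Fin 4) × (Fin 4 × Fin 4) × (Fin 4 × Fin 4) × (Fin 4 × Fin 4)) :=
  [((0, 1), (1, 2), (3, 0), (0, 1)), ((1, 2), (3, 0), (0, 1), (2, 3)),
    ((3, 0), (0, 1), (2, 3), (0, 1)), ((0, 1), (2, 3), (0, 1), (2, 3)),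
    ((2, 3), (0, 1), (2, 3), (0, 1)), ((0, 1), (2, 3), (0, 1), (1, 2)),
    ((2, 3), (0, 1), (1, 2), (3, 0))]

lemma oddCycleColumn_window_mem (k : ℕ) :
    (oddCycleColumn k, oddCycleColumn (k + 1), oddCycleColumn (k + 2), oddCycleColumn (k + 3)) ∈
      oddCycleWindows := by
  match k with
  | 0 | 1 | 2 => decide
  | k + 3 =>
    rcases Nat.even_or_odd k with hk | hk <;>
      simp [oddCycleColumn, oddCycleWindows, hk, Nat.even_add_one, Nat.not_even_iff_odd]

variable {k : ℕ} (hk : Odd k) (h3 : 3 ≤ k)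
include hk h3

lemma oddCycleColumn_window_mem_fin (j : Fin (k + 2)) :
    (oddCycleColumn j, oddCycleColumn ↑(j + 1), oddCycleColumn ↑(j + 1 + 1),
      oddCycleColumn ↑(j + 1 + 1 + 1)) ∈ oddCycleWindows := by
  obtain ⟨t, rfl⟩ : ∃ t, k = 2 * t + 3 := ⟨(k - 3) / 2, by obtain ⟨r, rfl⟩ := hk; omega⟩
  obtain ⟨v, hv⟩ := j
  simp only [Fin.val_add, Fin.val_one, Nat.mod_add_mod]
  rcases (by omega : v + 3 < 2 * t + 5 ∨ v = 2 * t + 2 ∨ v = 2 * t + 3 ∨ v = 2 * t + 4)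
    with hv3 | rfl | rfl | rfl
  · rw [Nat.mod_eq_of_lt (by omega), Nat.mod_eq_of_lt (by omega), Nat.mod_eq_of_lt (by omega)]
    exact oddCycleColumn_window_mem v
  · -- the column after the last one is column `0`, which has the colours of an odd column
    rw [Nat.mod_eq_of_lt (by omega), Nat.mod_eq_of_lt (by omega),
      show 2 * t + 2 + 1 + 1 + 1 = 2 * t + 3 + 2 by omega, Nat.mod_self]
    convert oddCycleColumn_window_mem (2 * t + 2) using 4
    simp [oddCycleColumn, parity_simps]
  · rw [Nat.mod_eq_of_lt (by omega), show 2 * t + 3 + 1 + 1 = 2 * t + 3 + 2 by omega,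
      Nat.mod_self, show 2 * t + 3 + 1 + 1 + 1 = 2 * t + 3 + 2 + 1 by omega, Nat.add_mod_left]
    simp [oddCycleColumn, oddCycleWindows, parity_simps]
  · rw [show 2 * t + 4 + 1 = 2 * t + 3 + 2 by omega, Nat.mod_self, Nat.add_mod_left,
      show 2 * t + 3 + 2 + 1 + 1 = 2 * t + 3 + 2 + 2 by omega, Nat.add_mod_left,
      Nat.mod_eq_of_lt (show 2 < 2 * t + 3 + 2 by omega)]
    simp [oddCycleColumn, oddCycleWindows, parity_simps]

lemma oddCycleColoring_separates (β : Bool) (i : Fin (k + 2)) :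
    oddCycleColoring (k + 2) β i ≠ oddCycleColoring (k + 2) (!β) i ∧
    oddCycleColoring (k + 2) β i ≠ oddCycleColoring (k + 2) β (i + 1) ∧
    layerColors (cycleGraph (k + 2)) (oddCycleColoring (k + 2)) β i ≠
      layerColors (cycleGraph (k + 2)) (oddCycleColoring (k + 2)) (!β) i ∧
    layerColors (cycleGraph (k + 2)) (oddCycleColoring (k + 2)) β i ≠
      layerColors (cycleGraph (k + 2)) (oddCycleColoring (k + 2)) β (i + 1) := by
  obtain ⟨j, rfl⟩ : ∃ j, i = j + 1 := ⟨i - 1, (sub_add_cancel i 1).symm⟩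
  have hw := oddCycleColumn_window_mem_fin hk h3 j
  simp only [layerColors_cycleGraph, add_sub_cancel_right, Ne, Finset.coe_inj, oddCycleColoring]
  generalize oddCycleColumn j = p, oddCycleColumn ↑(j + 1) = q, oddCycleColumn ↑(j + 1 + 1) = r,
    oddCycleColumn ↑(j + 1 + 1 + 1) = s at hw ⊢
  simp only [oddCycleWindows, List.mem_cons, List.not_mem_nil, or_false, Prod.mk.injEq] at hw
  rcases hw with ⟨rfl, rfl, rfl, rfl⟩ | ⟨rfl, rfl, rfl, rfl⟩ | ⟨rfl, rfl, rfl, rfl⟩ |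
    ⟨rfl, rfl, rfl, rfl⟩ | ⟨rfl, rfl, rfl, rfl⟩ | ⟨rfl, rfl, rfl, rfl⟩ | ⟨rfl, rfl, rfl, rfl⟩ <;>
    cases β <;> decide

end OddCycle

theorem lidColorable_four_cycleGraph_boxProd {m n : ℕ} (hm : Odd m) (h5 : 5 ≤ m) (hn : Even n)
    (h2 : 2 ≤ n) : (cycleGraph m □ cycleGraph n).LidColorable 4 := by
  obtain ⟨k, rfl⟩ : ∃ k, m = k + 2 := ⟨m - 2, by omega⟩
  obtain ⟨l, rfl⟩ : ∃ l, n = l + 2 := ⟨n - 2, by omega⟩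
  have sep := oddCycleColoring_separates (by simpa [parity_simps] using hm) (by omega)
  exact ⟨_, isLidColoring_boxProd_s7 (cycleGraph.bicoloring_of_even _ hn)
    (fun b => ⟨b + 1, cycleGraph_adj_iff_eq_add_one.mpr (Or.inl rfl)⟩) (oddCycleColoring (k + 2))
    (fun β i => (sep β i).1)
    (fun β _ _ => apply_ne_apply_of_cycleGraph_adj fun i => (sep β i).2.1)
    (fun β i => (sep β i).2.2.1)
    (fun β _ _ => apply_ne_apply_of_cycleGraph_adj fun i => (sep β i).2.2.2)⟩

end SimpleGraph

/-- For odd `m ≥ 5` and even `n ≥ 4`, `χ_lid(C_m □ C_n) = 4`. -/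
theorem lid_stmt_7 (m n : ℕ) (hm : Odd m) (hm5 : 5 ≤ m) (hn : Even n) (hn4 : 4 ≤ n) :
    (cycleGraph m □ cycleGraph n).lidChromaticNumber = 4 := by
  have : NeZero n := ⟨by omega⟩
  exact lidChromaticNumber_eq_succ (k := 3)
    (lidColorable_four_cycleGraph_boxProd hm hm5 hn (by omega))
    (not_lidColorable_three_cycleGraph_boxProd hm hm5 _)
end

section
/- Let G and H be connected simple graphs, each with at least two vertices, such that at least one of G and H has at least three vertices. If (u1,v1) and (u2,v2) are two adjacent vertices of the tensor product G × H, then the closed neighborhoods of (u1,v1) and (u2,v2) in G × H are distinct, i.e., N[(u1,v1)] ≠ N[(u2,v2)]. -/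
open SimpleGraph

/-!
If `N[(u₁, v₁)] = N[(u₂, v₂)]`, then for every neighbour `u` of `u₁` the vertex `(u, v₂)` is a
neighbour of `(u₁, v₁)`, hence lies in `N[(u₂, v₂)]`; sharing its second coordinate with
`(u₂, v₂)`, it cannot be adjacent to it, so `u = u₂`. Thus `u₁` and `u₂` are each other's only
neighbours, and connectedness leaves `G` with no other vertex. The same holds for `H`, so neither
factor has three vertices.
-/

namespace SimpleGraph

variable {V : Type*} {G : SimpleGraph V}

theorem Reachable.mem_of_forall_adj_mem {s : Set V} (hs : ∀ x ∈ s, ∀ y, G.Adj x y → y ∈ s)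
    {u v : V} (h : G.Reachable u v) (hu : u ∈ s) : v ∈ s := by
  obtain ⟨p⟩ := h
  induction p with
  | nil => exact hu
  | cons hadj _ ih => exact ih (hs _ hu _ hadj)

theorem Preconnected.eq_or_eq_of_forall_adj {a b : V} (hG : G.Preconnected)
    (ha : ∀ x, G.Adj a x → x = b) (hb : ∀ x, G.Adj b x → x = a) (x : V) : x = a ∨ x = b :=
  (hG a x).mem_of_forall_adj_mem (s := {a, b})
    (by rintro _ (rfl | rfl) y hy; exacts [Or.inr (ha y hy), Or.inl (hb y hy)]) (Or.inl rfl)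

variable {α β : Type*} {G : SimpleGraph α} {H : SimpleGraph β}

theorem eq_fst_of_closedNbhd_tensorProd_eq {x y : α × β}
    (hN : (G.tensorProd H).closedNbhd x = (G.tensorProd H).closedNbhd y) (hH : H.Adj x.2 y.2)
    {u : α} (hu : G.Adj x.1 u) : u = y.1 := by
  have hmem : (u, y.2) ∈ (G.tensorProd H).closedNbhd y := hN ▸ Or.inr ⟨hu, hH⟩
  rcases hmem with hEq | hAdj
  · exact congrArg Prod.fst hEq
  · exact absurd hAdj.2 (H.loopless.irrefl _)

theorem eq_snd_of_closedNbhd_tensorProd_eq {x y : α × β}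
    (hN : (G.tensorProd H).closedNbhd x = (G.tensorProd H).closedNbhd y) (hG : G.Adj x.1 y.1)
    {v : β} (hv : H.Adj x.2 v) : v = y.2 := by
  have hmem : (y.1, v) ∈ (G.tensorProd H).closedNbhd y := hN ▸ Or.inr ⟨hG, hv⟩
  rcases hmem with hEq | hAdj
  · exact congrArg Prod.snd hEq
  · exact absurd hAdj.1 (G.loopless.irrefl _)

end SimpleGraph

theorem not_exists_three_distinct_of_forall_eq_or_eq {γ : Type*} {a b : γ}
    (h : ∀ x, x = a ∨ x = b) : ¬ ∃ x y z : γ, x ≠ y ∧ x ≠ z ∧ y ≠ z := by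
  rintro ⟨x, y, z, hxy, hxz, hyz⟩
  rcases h x with rfl | rfl <;> rcases h y with rfl | rfl <;> rcases h z with rfl | rfl <;>
    contradiction

theorem lid_stmt_12_general {α β : Type*}
    (G : SimpleGraph α) (H : SimpleGraph β) (hG : G.Connected) (hH : H.Connected)
    (h3 : (∃ a b c : α, a ≠ b ∧ a ≠ c ∧ b ≠ c) ∨ (∃ a b c : β, a ≠ b ∧ a ≠ c ∧ b ≠ c))
    (u₁ u₂ : α) (v₁ v₂ : β) (h : (G.tensorProd H).Adj (u₁, v₁) (u₂, v₂)) :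
    (G.tensorProd H).closedNbhd (u₁, v₁) ≠ (G.tensorProd H).closedNbhd (u₂, v₂) := by
  intro hN
  have hG₂ : ∀ x, x = u₁ ∨ x = u₂ := hG.preconnected.eq_or_eq_of_forall_adj
    (fun _ hu => eq_fst_of_closedNbhd_tensorProd_eq hN h.2 hu)
    (fun _ hu => eq_fst_of_closedNbhd_tensorProd_eq hN.symm h.2.symm hu)
  have hH₂ : ∀ y, y = v₁ ∨ y = v₂ := hH.preconnected.eq_or_eq_of_forall_adj
    (fun _ hv => eq_snd_of_closedNbhd_tensorProd_eq hN h.1 hv)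
    (fun _ hv => eq_snd_of_closedNbhd_tensorProd_eq hN.symm h.1.symm hv)
  rcases h3 with h3 | h3
  exacts [not_exists_three_distinct_of_forall_eq_or_eq hG₂ h3,
    not_exists_three_distinct_of_forall_eq_or_eq hH₂ h3]

/-- If `G` and `H` are connected graphs with at least two vertices each, one of which has
at least three vertices, then adjacent vertices of the tensor product `G × H` have
distinct closed neighborhoods. -/
theorem lid_stmt_12 {α β : Type*} [Nontrivial α] [Nontrivial β]
    (G : SimpleGraph α) (H : SimpleGraph β) (hG : G.Connected) (hH : H.Connected)
    (h3 : (∃ a b c : α, a ≠ b ∧ a ≠ c ∧ b ≠ c) ∨ (∃ a b c : β, a ≠ b ∧ a ≠ c ∧ b ≠ c))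
    (u₁ u₂ : α) (v₁ v₂ : β) (h : (G.tensorProd H).Adj (u₁, v₁) (u₂, v₂)) :
    (G.tensorProd H).closedNbhd (u₁, v₁) ≠ (G.tensorProd H).closedNbhd (u₂, v₂) :=
  lid_stmt_12_general G H hG hH h3 u₁ u₂ v₁ v₂ h
end
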